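/- The identity [[-8,0],[0,-1/8]] = X^{12} (Y X^{-1})^2 X^{-1} Y^{-2} holds in GL_2(Q), where X = [[1,3/2],[0,1]] and Y = [[1,0],[3/2,1]]. In particular [[-8,0],[0,-1/8]] lies in the subgroup of SL_2(Z[1/2]) generated by X and Y. -/

import Mathlib

abbrev SL2Q := Matrix.SpecialLinearGroup (Fin 2) ℚ

/-- A = [[1,0],[1,1]] -/
def matA : SL2Q := ⟨!![1,0;1,1], by norm_num [Matrix.det_fin_two_of]⟩
/-- B = [[0,1],[-1,0]] -/
def matB : SL2Q := ⟨!![0,1;-1,0], by norm_num [Matrix.det_fin_two_of]⟩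
/-- Q_q = [[1,q],[0,1]] -/
def matQ (q : ℚ) : SL2Q := ⟨!![1,q;0,1], by norm_num [Matrix.det_fin_two_of]⟩
/-- U_p = [[p,0],[0,1/p]] -/
def matU (p : ℚ) (hp : p ≠ 0) : SL2Q := ⟨!![p,0;0,p⁻¹], by rw [Matrix.det_fin_two_of]; field_simp; norm_num⟩
/-- lower unipotent [[1,0],[x,1]] -/
def matL (x : ℚ) : SL2Q := ⟨!![1,0;x,1], by norm_num [Matrix.det_fin_two_of]⟩

/-- the matrix [[-8,0],[0,-1/8]] -/
def matD : SL2Q := ⟨!![-8,0;0,-(1/8)], by norm_num [Matrix.det_fin_two_of]⟩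

/-! Both unipotent families are homomorphisms from the additive group of `ℚ`, so every power
of `X` or `Y` is again unipotent and the identity reduces to multiplying out a few explicit
unipotent matrices. -/

lemma matQ_add (a b : ℚ) : matQ (a + b) = matQ a * matQ b :=
  Subtype.ext (show !![1, a + b; 0, 1] = !![1, a; 0, 1] * !![1, b; 0, 1] by simp [add_comm])

lemma matL_add (a b : ℚ) : matL (a + b) = matL a * matL b :=
  Subtype.ext (show !![1, 0; a + b, 1] = !![1, 0; a, 1] * !![1, 0; b, 1] by simp)

lemma matQ_zero : matQ 0 = 1 :=
  Subtype.ext (show !![1, 0; 0, 1] = 1 from Matrix.one_fin_two.symm)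

lemma matL_zero : matL 0 = 1 :=
  Subtype.ext (show !![1, 0; 0, 1] = 1 from Matrix.one_fin_two.symm)

def matQHom : Multiplicative ℚ →* SL2Q where
  toFun a := matQ a.toAdd
  map_one' := matQ_zero
  map_mul' a b := matQ_add a.toAdd b.toAdd

def matLHom : Multiplicative ℚ →* SL2Q where
  toFun a := matL a.toAdd
  map_one' := matL_zero
  map_mul' a b := matL_add a.toAdd b.toAdd

lemma matQ_zpow (q : ℚ) (n : ℤ) : matQ q ^ n = matQ (n * q) := by
  simpa [matQHom, zsmul_eq_mul] using (map_zpow matQHom (Multiplicative.ofAdd q) n).symm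

lemma matL_zpow (x : ℚ) (n : ℤ) : matL x ^ n = matL (n * x) := by
  simpa [matLHom, zsmul_eq_mul] using (map_zpow matLHom (Multiplicative.ofAdd x) n).symm

lemma matQ_pow (q : ℚ) (n : ℕ) : matQ q ^ n = matQ (n * q) := by
  simpa using matQ_zpow q n

lemma matQ_inv (q : ℚ) : (matQ q)⁻¹ = matQ (-q) := by
  simpa using matQ_zpow q (-1)

lemma matD_eq_word :
    matD = matQ 18 * (matL (3/2) * matQ (-(3/2))) ^ 2 * matQ (-(3/2)) * matL (-3) :=
  Subtype.ext (show !![-8, 0; 0, -(1/8)] =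
      !![1, 18; 0, 1] * (!![1, 0; 3/2, 1] * !![1, -(3/2); 0, 1]) ^ 2 * !![1, -(3/2); 0, 1] *
        !![1, 0; -3, 1] by norm_num [sq])

theorem stmt19 :
    matD = (matQ (3/2))^12 * (matL (3/2) * (matQ (3/2))⁻¹)^2 * (matQ (3/2))⁻¹ *
      (matL (3/2))^(-2:ℤ) ∧
    matD ∈ Subgroup.closure {matQ (3/2), matL (3/2)} := by
  have hQ : matQ (3/2) ∈ Subgroup.closure {matQ (3/2), matL (3/2)} :=
    Subgroup.subset_closure (by simp)
  have hL : matL (3/2) ∈ Subgroup.closure {matQ (3/2), matL (3/2)} :=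
    Subgroup.subset_closure (by simp)
  refine (fun heq => ⟨heq, heq ▸ ?_⟩) ?_
  · rw [matQ_pow, matL_zpow, matQ_inv, matD_eq_word]
    norm_num
  · exact mul_mem (mul_mem (mul_mem (pow_mem hQ 12) (pow_mem (mul_mem hL (inv_mem hQ)) 2))
      (inv_mem hQ)) (zpow_mem hL _)
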